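/- Let N ≥ 2 and α ∈ (0,1). Then the function ν : (0,∞) → ℝ is differentiable and ν′(R) > 0 for every R > 0; in particular ν is strictly increasing on (0,∞). -/

import Mathlib

/-!
Substituting `t = 2R s` turns the second term of `ν` into
`2^{-α} ∫ (1 + cos (2R s₁)) (1 + |s|²)^{-p} ds` with `p = (N + α)/2`, while the first term is
`R^{1+α}` times a nonnegative constant. Differentiating under the integral sign, `ν'(R)` is thus at
least `2^{1-α} ∫ s₁ sin (2R s₁) (1 + |s|²)^{-p} ds`. This integral is positive: by the subordination
`Γ(p) (1 + |s|²)^{-p} = ∫₀^∞ τ^{p-1} e^{-τ} e^{-τ|s|²} dτ` and Fubini it becomes an average, with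
positive weights, of the Gaussian integrals
`∫ s₁ sin (ξ s₁) e^{-τ|s|²} ds = (π/τ)^{(N-1)/2} (ξ/2τ) e^{-ξ²/4τ}`, which come from
differentiating the Fourier transform of the Gaussian in `ξ`.
-/

open MeasureTheory Real Filter Topology

noncomputable section

abbrev ES (m : ℕ) : Type := EuclideanSpace ℝ (Fin (m + 1))

/-- The eigenvalue function
`ν(R) = 2R^{1+α} (∫ (1-cos t₁)/|t|^{N+α} dt - ∫ (1+cos t₁)/(|t|²+4R²)^{(N+α)/2} dt)`,
with `N = m + 2`. -/
def nu (m : ℕ) (α : ℝ) (R : ℝ) : ℝ :=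
  2 * R ^ (1 + α) *
    ((∫ t : ES m, (1 - Real.cos (t 0)) / ‖t‖ ^ ((m : ℝ) + 2 + α)) -
      ∫ t : ES m, (1 + Real.cos (t 0)) / (‖t‖ ^ 2 + 4 * R ^ 2) ^ (((m : ℝ) + 2 + α) / 2))

open scoped RealInnerProductSpace
open Module Set

section ParametricCosine

variable {α : Type*} [MeasurableSpace α] {μ : Measure α} {f g : α → ℝ}

theorem hasDerivAt_integral_cos_mul_mul (hf : AEStronglyMeasurable f μ) (hg : Integrable g μ)
    (hfg : Integrable (fun a => f a * g a) μ) (ξ₀ : ℝ) :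
    HasDerivAt (fun ξ => ∫ a, cos (ξ * f a) * g a ∂μ)
      (-∫ a, f a * sin (ξ₀ * f a) * g a ∂μ) ξ₀ := by
  have hF : ∀ ξ : ℝ, AEStronglyMeasurable (fun a => cos (ξ * f a) * g a) μ := fun ξ =>
    (continuous_cos.comp_aestronglyMeasurable (hf.const_mul ξ)).mul hg.1
  have hF' : AEStronglyMeasurable (fun a => -(f a * sin (ξ₀ * f a) * g a)) μ :=
    ((hf.mul (continuous_sin.comp_aestronglyMeasurable (hf.const_mul ξ₀))).mul hg.1).neg
  rw [← integral_neg]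
  refine (hasDerivAt_integral_of_dominated_loc_of_deriv_le
    (F' := fun ξ a => -(f a * sin (ξ * f a) * g a)) (bound := fun a => ‖f a * g a‖)
    univ_mem (.of_forall hF) (hg.mono (hF ξ₀) (ae_of_all _ fun a => ?_)) hF'
    (ae_of_all _ fun a ξ _ => ?_) hfg.norm (ae_of_all _ fun a ξ _ => ?_)).2
  · rw [norm_mul]
    exact mul_le_of_le_one_left (norm_nonneg (g a)) (abs_cos_le_one _)
  · rw [norm_neg, mul_right_comm, norm_mul (f a * g a)]
    exact mul_le_of_le_one_right (norm_nonneg (f a * g a)) (abs_sin_le_one _)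
  · exact ((hasDerivAt_mul_const (f a)).cos.mul_const (g a)).congr_deriv (by ring)

end ParametricCosine

section BracketWeight

variable {V : Type*} [NormedAddCommGroup V] {p : ℝ}

def bracketWeight (p : ℝ) (v : V) : ℝ := (1 + ‖v‖ ^ 2) ^ (-p)

theorem bracketWeight_nonneg (p : ℝ) (v : V) : 0 ≤ bracketWeight p v := by
  unfold bracketWeight; positivity

@[fun_prop]
theorem continuous_bracketWeight (p : ℝ) : Continuous (bracketWeight p : V → ℝ) :=
  (by fun_prop : Continuous fun v : V => 1 + ‖v‖ ^ 2).rpow_const fun v => .inl (by positivity)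

theorem integral_rpow_mul_exp_neg_mul_one_add_sq_norm (hp : 0 < p) (v : V) :
    ∫ t in Ioi 0, t ^ (p - 1) * rexp (-((1 + ‖v‖ ^ 2) * t)) = Gamma p * bracketWeight p v := by
  rw [integral_rpow_mul_exp_neg_mul_Ioi hp (by positivity), one_div, inv_rpow (by positivity),
    ← rpow_neg (by positivity), mul_comm, bracketWeight]

end BracketWeight

section Gaussian

variable {V : Type*} [NormedAddCommGroup V] [InnerProductSpace ℝ V] [FiniteDimensional ℝ V]
  [MeasurableSpace V] [BorelSpace V] {p t : ℝ}

theorem integrable_exp_neg_mul_sq_norm_add_mul_inner (ht : 0 < t) (c : ℝ) (u : V) :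
    Integrable (fun v : V => rexp (-t * ‖v‖ ^ 2 + c * ⟪u, v⟫)) := by
  refine (GaussianFourier.integrable_cexp_neg_mul_sq_norm_add (b := (t : ℂ)) (by simpa) c u).norm
    |>.congr (ae_of_all _ fun v => ?_)
  simp [Complex.norm_exp, ← Complex.ofReal_pow]

theorem integrable_inner_mul_exp_neg_mul_sq_norm (ht : 0 < t) (u : V) :
    Integrable (fun v : V => ⟪u, v⟫ * rexp (-t * ‖v‖ ^ 2)) := by
  refine ((integrable_exp_neg_mul_sq_norm_add_mul_inner ht 1 u).add
    (integrable_exp_neg_mul_sq_norm_add_mul_inner ht (-1) u)).mono' (by fun_prop)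
    (ae_of_all _ fun v => ?_)
  have habs : |⟪u, v⟫| ≤ rexp ⟪u, v⟫ + rexp (-⟪u, v⟫) := abs_le.2
    ⟨by linarith [exp_pos ⟪u, v⟫, add_one_le_exp (-⟪u, v⟫)],
      by linarith [exp_pos (-⟪u, v⟫), add_one_le_exp ⟪u, v⟫]⟩
  rw [norm_mul, norm_of_nonneg (exp_pos _).le, Real.norm_eq_abs]
  simp only [Pi.add_apply, exp_add, one_mul, neg_one_mul]
  nlinarith [exp_pos (-t * ‖v‖ ^ 2)]

theorem integral_cos_mul_inner_mul_exp_neg_mul_sq_norm (ht : 0 < t) (u : V) (ξ : ℝ) :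
    ∫ v : V, cos (ξ * ⟪u, v⟫) * rexp (-t * ‖v‖ ^ 2)
      = (π / t) ^ (finrank ℝ V / 2 : ℝ) * rexp (-(ξ ^ 2 * ‖u‖ ^ 2) / (4 * t)) := by
  have hb : 0 < (t : ℂ).re := by simpa
  have h := congrArg Complex.re
    (GaussianFourier.integral_cexp_neg_mul_sq_norm_add (V := V) hb (ξ * Complex.I) u)
  rw [← RCLike.re_to_complex, ← integral_re
    (GaussianFourier.integrable_cexp_neg_mul_sq_norm_add hb _ u)] at h
  convert h using 1
  · congr 1 with v
    rw [RCLike.re_to_complex, Complex.exp_re]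
    simp [← Complex.ofReal_pow]
    ring
  · have hexp : ((ξ : ℂ) * Complex.I) ^ 2 * (‖u‖ : ℂ) ^ 2 / (4 * t)
        = ((-(ξ ^ 2 * ‖u‖ ^ 2) / (4 * t) : ℝ) : ℂ) := by
      push_cast
      rw [mul_pow, Complex.I_sq]
      ring
    have hpow : (π / t : ℂ) ^ (finrank ℝ V / 2 : ℂ) = ((π / t) ^ (finrank ℝ V / 2 : ℝ) : ℝ) := by
      rw [Complex.ofReal_cpow (by positivity)]
      push_cast
      rfl
    rw [hexp, hpow, ← Complex.ofReal_exp, ← Complex.ofReal_mul, Complex.ofReal_re]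

theorem integral_inner_mul_sin_mul_exp_neg_mul_sq_norm (ht : 0 < t) (u : V) (ξ : ℝ) :
    ∫ v : V, ⟪u, v⟫ * sin (ξ * ⟪u, v⟫) * rexp (-t * ‖v‖ ^ 2)
      = (π / t) ^ (finrank ℝ V / 2 : ℝ) * (ξ * ‖u‖ ^ 2 / (2 * t))
          * rexp (-(ξ ^ 2 * ‖u‖ ^ 2) / (4 * t)) := by
  set K := (π / t) ^ (finrank ℝ V / 2 : ℝ)
  have hderiv := hasDerivAt_integral_cos_mul_mul (by fun_prop)
    (integrable_exp_neg_mul_sq_norm_add_mul_inner ht 0 0 |>.congr (by simp))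
    (integrable_inner_mul_exp_neg_mul_sq_norm ht u) ξ
  simp only [integral_cos_mul_inner_mul_exp_neg_mul_sq_norm ht u] at hderiv
  have hgauss : HasDerivAt (fun ξ => K * rexp (-(ξ ^ 2 * ‖u‖ ^ 2) / (4 * t)))
      (K * (rexp (-(ξ ^ 2 * ‖u‖ ^ 2) / (4 * t)) * (-(2 * ξ * ‖u‖ ^ 2) / (4 * t)))) ξ := by
    refine (HasDerivAt.exp ?_).const_mul K
    simpa using ((hasDerivAt_pow 2 ξ).mul_const (‖u‖ ^ 2)).neg.div_const (4 * t)
  have := hderiv.unique hgauss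
  linear_combination -this

theorem integrable_bracketWeight (hp : (finrank ℝ V : ℝ) < 2 * p) :
    Integrable (bracketWeight p : V → ℝ) := by
  refine (integrable_rpow_neg_one_add_norm_sq (E := V) (μ := volume) hp).congr
    (ae_of_all _ fun v => ?_)
  rw [bracketWeight]
  ring_nf

theorem integrable_inner_mul_bracketWeight (hp : (finrank ℝ V : ℝ) + 1 < 2 * p) (u : V) :
    Integrable (fun v => ⟪u, v⟫ * bracketWeight p v) := by
  refine ((integrable_bracketWeight (p := p - 1 / 2) (by linarith)).const_mul ‖u‖).mono'
    (by fun_prop) (ae_of_all _ fun v => ?_)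
  have hpos : 0 < 1 + ‖v‖ ^ 2 := by positivity
  have hnorm : ‖v‖ ≤ (1 + ‖v‖ ^ 2) ^ (1 / 2 : ℝ) := by
    rw [← sqrt_eq_rpow]
    exact le_sqrt_of_sq_le (by linarith)
  calc ‖⟪u, v⟫ * bracketWeight p v‖ = |⟪u, v⟫| * bracketWeight p v := by
        rw [norm_mul, norm_of_nonneg (bracketWeight_nonneg _ _), Real.norm_eq_abs]
    _ ≤ ‖u‖ * (1 + ‖v‖ ^ 2) ^ (1 / 2 : ℝ) * bracketWeight p v :=
        mul_le_mul_of_nonneg_right ((abs_real_inner_le_norm u v).trans (by gcongr))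
          (bracketWeight_nonneg _ _)
    _ = ‖u‖ * bracketWeight (p - 1 / 2) v := by
        unfold bracketWeight
        rw [mul_assoc, ← rpow_add hpos]
        ring_nf

theorem integrable_uncurry_mul_rpow_mul_exp_neg_mul_one_add_sq_norm (hp : 0 < p) {h : V → ℝ}
    (hh : AEStronglyMeasurable h) (hhw : Integrable (fun v => h v * bracketWeight p v)) :
    Integrable (Function.uncurry fun v t => h v * (t ^ (p - 1) * rexp (-((1 + ‖v‖ ^ 2) * t))))
      (volume.prod (volume.restrict (Ioi 0))) := by
  have hmeas : AEStronglyMeasurable (Function.uncurry fun v t =>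
      h v * (t ^ (p - 1) * rexp (-((1 + ‖v‖ ^ 2) * t)))) (volume.prod (volume.restrict (Ioi 0))) :=
    hh.comp_fst.mul (by fun_prop : Measurable fun q : V × ℝ =>
      q.2 ^ (p - 1) * rexp (-((1 + ‖q.1‖ ^ 2) * q.2))).aestronglyMeasurable
  refine (integrable_prod_iff hmeas).2 ⟨ae_of_all _ fun v => ?_, ?_⟩
  · have hgamma := integrableOn_rpow_mul_exp_neg_mul_rpow (p := 1) (s := p - 1)
      (b := 1 + ‖v‖ ^ 2) (by linarith) one_pos (by positivity)
    simp only [rpow_one, neg_mul] at hgamma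
    exact hgamma.const_mul (h v)
  · refine (hhw.norm.const_mul (Gamma p)).congr (ae_of_all _ fun v => ?_)
    have hnonneg : ∀ t ∈ Ioi (0 : ℝ), 0 ≤ t ^ (p - 1) * rexp (-((1 + ‖v‖ ^ 2) * t)) :=
      fun t ht => mul_nonneg (rpow_nonneg (le_of_lt ht) _) (exp_pos _).le
    simp only [Function.uncurry_apply_pair]
    rw [setIntegral_congr_fun measurableSet_Ioi fun t ht => by
        rw [norm_mul, norm_of_nonneg (hnonneg t ht)],
      integral_const_mul, integral_rpow_mul_exp_neg_mul_one_add_sq_norm hp, norm_mul,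
      norm_of_nonneg (bracketWeight_nonneg _ _)]
    ring

theorem Gamma_mul_integral_mul_bracketWeight (hp : 0 < p) {h : V → ℝ}
    (hh : AEStronglyMeasurable h) (hhw : Integrable (fun v => h v * bracketWeight p v)) :
    IntegrableOn (fun t => t ^ (p - 1) * rexp (-t) * ∫ v, h v * rexp (-t * ‖v‖ ^ 2)) (Ioi 0) ∧
      Gamma p * ∫ v, h v * bracketWeight p v
        = ∫ t in Ioi 0, t ^ (p - 1) * rexp (-t) * ∫ v, h v * rexp (-t * ‖v‖ ^ 2) := by
  have hK := integrable_uncurry_mul_rpow_mul_exp_neg_mul_one_add_sq_norm hp hh hhw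
  have hslice : ∀ t : ℝ, ∫ v, h v * (t ^ (p - 1) * rexp (-((1 + ‖v‖ ^ 2) * t)))
      = t ^ (p - 1) * rexp (-t) * ∫ v, h v * rexp (-t * ‖v‖ ^ 2) := fun t => by
    rw [← integral_const_mul]
    congr 1 with v
    rw [show -((1 + ‖v‖ ^ 2) * t) = -t + -t * ‖v‖ ^ 2 by ring, exp_add]
    ring
  refine ⟨hK.integral_prod_right.congr (ae_of_all _ hslice), ?_⟩
  calc Gamma p * ∫ v, h v * bracketWeight p v
      = ∫ v, ∫ t in Ioi 0, h v * (t ^ (p - 1) * rexp (-((1 + ‖v‖ ^ 2) * t))) := by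
        rw [← integral_const_mul]
        congr 1 with v
        rw [integral_const_mul, integral_rpow_mul_exp_neg_mul_one_add_sq_norm hp]
        ring
    _ = ∫ t in Ioi 0, ∫ v, h v * (t ^ (p - 1) * rexp (-((1 + ‖v‖ ^ 2) * t))) :=
        integral_integral_swap hK
    _ = _ := by simp only [hslice]

theorem integral_inner_mul_sin_mul_bracketWeight_pos (hp : (finrank ℝ V : ℝ) + 1 < 2 * p)
    {u : V} (hu : u ≠ 0) {ξ : ℝ} (hξ : 0 < ξ) :
    0 < ∫ v, ⟪u, v⟫ * sin (ξ * ⟪u, v⟫) * bracketWeight p v := by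
  have hp0 : 0 < p := by linarith [(finrank ℝ V).cast_nonneg (α := ℝ)]
  have hu' := norm_pos_iff.2 hu
  have hhw : Integrable (fun v => ⟪u, v⟫ * sin (ξ * ⟪u, v⟫) * bracketWeight p v) :=
    (integrable_inner_mul_bracketWeight hp u).mono (by fun_prop) (ae_of_all _ fun v => by
      rw [mul_right_comm, norm_mul (⟪u, v⟫ * bracketWeight p v)]
      exact mul_le_of_le_one_right (norm_nonneg _) (abs_sin_le_one _))
  obtain ⟨hint, hfubini⟩ := Gamma_mul_integral_mul_bracketWeight hp0
    (h := fun v => ⟪u, v⟫ * sin (ξ * ⟪u, v⟫)) (by fun_prop) hhw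
  have hslice_pos : ∀ t ∈ Ioi (0 : ℝ),
      0 < t ^ (p - 1) * rexp (-t) * ∫ v, ⟪u, v⟫ * sin (ξ * ⟪u, v⟫) * rexp (-t * ‖v‖ ^ 2) :=
    fun t ht => by
      rw [integral_inner_mul_sin_mul_exp_neg_mul_sq_norm ht]
      have := ht.out
      positivity
  have hpos : 0 < ∫ t in Ioi 0,
      t ^ (p - 1) * rexp (-t) * ∫ v, ⟪u, v⟫ * sin (ξ * ⟪u, v⟫) * rexp (-t * ‖v‖ ^ 2) := by
    have hsupp : Ioi (0 : ℝ) ⊆ Function.support _ := fun t ht => (hslice_pos t ht).ne'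
    rw [setIntegral_pos_iff_support_of_nonneg_ae
        ((ae_restrict_iff' measurableSet_Ioi).2 (ae_of_all _ fun t ht => (hslice_pos t ht).le))
        hint, inter_eq_right.2 hsupp, volume_Ioi]
    exact ENNReal.zero_lt_top
  exact pos_of_mul_pos_right (hfubini ▸ hpos) (Gamma_pos_of_pos hp0).le

theorem integral_div_sq_norm_add_sq_rpow (F : V → ℝ) {c : ℝ} (hc : 0 < c) (p : ℝ) :
    ∫ v, F v / (‖v‖ ^ 2 + c ^ 2) ^ p
      = c ^ ((finrank ℝ V : ℝ) - 2 * p) * ∫ v, F (c • v) * bracketWeight p v := by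
  have h := Measure.integral_comp_smul (volume : Measure V) (fun v => F v / (‖v‖ ^ 2 + c ^ 2) ^ p) c
  have hc2 : (c ^ 2) ^ p = c ^ (2 * p) := by
    rw [← rpow_natCast, ← rpow_mul hc.le]
    norm_num
  have hpt : ∀ v : V, F (c • v) / (‖c • v‖ ^ 2 + c ^ 2) ^ p
      = c ^ (-(2 * p)) * (F (c • v) * bracketWeight p v) := fun v => by
    rw [norm_smul, norm_of_nonneg hc.le, show (c * ‖v‖) ^ 2 + c ^ 2 = c ^ 2 * (1 + ‖v‖ ^ 2) by ring,
      mul_rpow (by positivity) (by positivity), hc2, bracketWeight, rpow_neg hc.le,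
      rpow_neg (by positivity)]
    field_simp
  simp only [hpt, integral_const_mul, smul_eq_mul] at h
  rw [abs_of_pos (by positivity), rpow_neg hc.le] at h
  rw [sub_eq_add_neg, rpow_add hc, rpow_natCast, rpow_neg hc.le, mul_assoc, h, ← mul_assoc,
    mul_inv_cancel₀ (by positivity), one_mul]

end Gaussian

theorem inner_single_one_left {ι : Type*} [Fintype ι] [DecidableEq ι] (i : ι)
    (s : EuclideanSpace ℝ ι) : ⟪EuclideanSpace.single i 1, s⟫ = s i := by
  simp [EuclideanSpace.inner_single_left]

section Nu

variable {m : ℕ} {α : ℝ}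

theorem nu_eq_of_pos (hα : -1 < α) {R : ℝ} (hR : 0 < R) :
    nu m α R = 2 * R ^ (1 + α) * (∫ t : ES m, (1 - cos (t 0)) / ‖t‖ ^ ((m : ℝ) + 2 + α))
      - 2 ^ (-α) * ((∫ s : ES m, bracketWeight (((m : ℝ) + 2 + α) / 2) s)
        + ∫ s : ES m, cos (2 * R * s 0) * bracketWeight (((m : ℝ) + 2 + α) / 2) s) := by
  set p := ((m : ℝ) + 2 + α) / 2
  have hw : Integrable (bracketWeight p : ES m → ℝ) :=
    integrable_bracketWeight (by rw [finrank_euclideanSpace_fin]; push_cast; unfold p; linarith)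
  have hcosw : Integrable fun s : ES m => cos (2 * R * s 0) * bracketWeight p s :=
    hw.bdd_mul (by fun_prop) (ae_of_all _ fun s => abs_cos_le_one _)
  have hscale := integral_div_sq_norm_add_sq_rpow (fun t : ES m => 1 + cos (t 0))
    (show 0 < 2 * R by positivity) p
  simp only [PiLp.smul_apply, smul_eq_mul, add_mul, one_mul, finrank_euclideanSpace_fin,
    integral_add hw hcosw] at hscale
  rw [nu, mul_sub, show 4 * R ^ 2 = (2 * R) ^ 2 by ring, hscale, ← mul_assoc]
  congr 2
  rw [show (↑(m + 1) : ℝ) - 2 * p = -(1 + α) by push_cast; ring, mul_rpow two_pos.le hR.le,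
    rpow_neg two_pos.le, rpow_neg hR.le, rpow_neg two_pos.le, rpow_add two_pos, rpow_one]
  field_simp

theorem hasDerivAt_nu (hα : 0 < α) {R : ℝ} (hR : 0 < R) :
    HasDerivAt (nu m α)
      (2 * (1 + α) * R ^ α * (∫ t : ES m, (1 - cos (t 0)) / ‖t‖ ^ ((m : ℝ) + 2 + α))
        + 2 ^ (1 - α) * ∫ s : ES m,
          s 0 * sin (2 * R * s 0) * bracketWeight (((m : ℝ) + 2 + α) / 2) s) R := by
  set p := ((m : ℝ) + 2 + α) / 2
  set A := ∫ t : ES m, (1 - cos (t 0)) / ‖t‖ ^ ((m : ℝ) + 2 + α)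
  have hp : (finrank ℝ (ES m) : ℝ) + 1 < 2 * p := by
    rw [finrank_euclideanSpace_fin]; push_cast; unfold p; linarith
  have hcos := hasDerivAt_integral_cos_mul_mul (by fun_prop)
    (integrable_bracketWeight (p := p) (by linarith))
    (integrable_inner_mul_bracketWeight hp (EuclideanSpace.single 0 1)) (2 * R)
  simp only [inner_single_one_left] at hcos
  have hpow := (hasDerivAt_rpow_const (p := 1 + α) (.inl hR.ne')).const_mul 2
  have hnu := (hpow.mul_const A).sub
    (((hcos.comp R ((hasDerivAt_id R).const_mul 2)).const_add
      (∫ s : ES m, bracketWeight p s)).const_mul (2 ^ (-α)))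
  refine (hnu.congr_of_eventuallyEq
    (eventually_gt_nhds hR |>.mono fun r hr => nu_eq_of_pos (by linarith) hr)).congr_deriv ?_
  rw [show 1 + α - 1 = α by ring, sub_eq_add_neg 1 α, rpow_add two_pos, rpow_one]
  ring

end Nu

theorem statement_8 (m : ℕ) (α : ℝ) (hα : α ∈ Set.Ioo (0 : ℝ) 1) :
    (∀ R : ℝ, 0 < R → ∃ d : ℝ, HasDerivAt (nu m α) d R ∧ 0 < d) ∧
      StrictMonoOn (nu m α) (Set.Ioi 0) := by
  have hderiv : ∀ R : ℝ, 0 < R → ∃ d : ℝ, HasDerivAt (nu m α) d R ∧ 0 < d := fun R hR => by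
    refine ⟨_, hasDerivAt_nu hα.1 hR, ?_⟩
    have hA : 0 ≤ ∫ t : ES m, (1 - cos (t 0)) / ‖t‖ ^ ((m : ℝ) + 2 + α) :=
      integral_nonneg fun t => div_nonneg (sub_nonneg.2 (cos_le_one _)) (by positivity)
    have hH := integral_inner_mul_sin_mul_bracketWeight_pos (p := ((m : ℝ) + 2 + α) / 2)
      (by rw [finrank_euclideanSpace_fin]; push_cast; linarith [hα.1])
      (by simp : EuclideanSpace.single (0 : Fin (m + 1)) (1 : ℝ) ≠ 0) (by positivity : 0 < 2 * R)
    simp only [inner_single_one_left] at hH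
    have := hα.1
    positivity
  refine ⟨hderiv, strictMonoOn_of_deriv_pos (convex_Ioi 0) (fun R hR => ?_) fun R hR => ?_⟩
  · exact (hderiv R hR).choose_spec.1.continuousAt.continuousWithinAt
  · rw [interior_Ioi] at hR
    obtain ⟨d, hd, hd_pos⟩ := hderiv R hR
    rwa [hd.deriv]
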